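/- arXiv:2410.14517 — 7 statements merged into one kernel-verified Lean document; each statement's English description precedes it below -/
import Mathlib

section
/- Let G be a countable discrete group, let χ be a character on G (a normalized, conjugation-invariant, positive definite function), and let ε ≥ 0. Suppose g ∈ G is such that for every n ∈ ℕ there exist n elements g₁, …, gₙ, each conjugate to g in G, with |χ(gᵢgⱼ⁻¹)| ≤ ε for all i < j. Then |χ(g)| ≤ ε^{1/2}. -/
open scoped BigOperators ComplexOrder

/-- A character on a group `G`: a normalized, conjugation-invariant,
positive definite complex-valued function. -/
def IsCharacter {G : Type*} [Group G] (χ : G → ℂ) : Prop :=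
  χ 1 = 1 ∧ (∀ g h : G, χ (h * g * h⁻¹) = χ g) ∧
    ∀ (n : ℕ) (g : Fin n → G) (α : Fin n → ℂ),
      0 ≤ ∑ i, ∑ j, (starRingEnd ℂ) (α i) * α j * χ ((g i)⁻¹ * g j)

/-!
Put `c = χ g` and choose conjugates `f₁, …, fₙ` of `g` as in the hypothesis, so that `χ (fᵢ) = c`.
Positive definiteness applied to the vector `-c̄ δ₁ + ∑ᵢ δ_{fᵢ⁻¹}` is the Cauchy–Schwarz
inequality `|∑ᵢ χ (fᵢ)|² ≤ ∑ᵢⱼ χ (fᵢ fⱼ⁻¹)`, i.e. `n² |c|² ≤ n + n² ε`. Letting `n → ∞` gives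
`|c|² ≤ ε`.
-/

open ComplexConjugate

def IsPosDefFun {G : Type*} [Group G] (φ : G → ℂ) : Prop :=
  ∀ (n : ℕ) (g : Fin n → G) (α : Fin n → ℂ),
    0 ≤ ∑ i, ∑ j, conj (α i) * α j * φ ((g i)⁻¹ * g j)

namespace IsPosDefFun

variable {G : Type*} [Group G] {φ : G → ℂ}

theorem zero_le_apply_one (hφ : IsPosDefFun φ) : 0 ≤ φ 1 := by
  simpa using hφ 1 ![1] ![1]

theorem apply_inv (hφ : IsPosDefFun φ) (x : G) : φ x⁻¹ = conj (φ x) := by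
  have h1 := Complex.le_def.mp hφ.zero_le_apply_one
  have h2 := Complex.le_def.mp (hφ 2 ![1, x] ![1, 1])
  have h3 := Complex.le_def.mp (hφ 2 ![1, x] ![1, Complex.I])
  simp only [Complex.zero_re, Complex.zero_im, Fin.sum_univ_two, Fin.isValue, Matrix.cons_val_zero,
    mul_one, Matrix.cons_val_one, Matrix.cons_val_fin_one, map_one, inv_one, one_mul, inv_mul_cancel,
    Complex.add_re, Complex.add_im, Complex.conj_I, neg_mul, Complex.I_mul_I, neg_neg,
    Complex.mul_re, Complex.I_re, zero_mul, Complex.I_im, zero_sub, Complex.neg_re, Complex.mul_im,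
    zero_add, Complex.neg_im] at h1 h2 h3
  apply Complex.ext <;> simp only [Complex.conj_re, Complex.conj_im] <;> linarith

theorem norm_apply_mul_inv_comm (hφ : IsPosDefFun φ) (x y : G) :
    ‖φ (x * y⁻¹)‖ = ‖φ (y * x⁻¹)‖ := by
  rw [show y * x⁻¹ = (x * y⁻¹)⁻¹ by group, hφ.apply_inv, Complex.norm_conj]

theorem normSq_sum_le (hφ : IsPosDefFun φ) (h1 : φ 1 = 1) {n : ℕ} (f : Fin n → G) :
    Complex.normSq (∑ i, φ (f i)) ≤ (∑ i, ∑ j, φ (f i * (f j)⁻¹)).re := by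
  set s := ∑ i, φ (f i)
  set g : Fin (n + 1) → G := Fin.cons 1 fun i => (f i)⁻¹ with hg
  set α : Fin (n + 1) → ℂ := Fin.cons (-conj s) 1 with hα
  have hexpand : ∑ i, ∑ j, conj (α i) * α j * φ ((g i)⁻¹ * g j) =
      ∑ i, ∑ j, φ (f i * (f j)⁻¹) - (Complex.normSq s : ℂ) := by
    simp only [hg, hα, Fin.sum_univ_succ, Fin.cons_zero, Fin.cons_succ, inv_one, inv_inv,
      one_mul, mul_one, h1, hφ.apply_inv, Pi.one_apply, map_one, map_neg, Complex.conj_conj,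
      Finset.sum_add_distrib, ← Finset.mul_sum, ← map_sum, Complex.normSq_eq_conj_mul_self]
    ring
  have hpos := hφ (n + 1) g α
  rw [hexpand, sub_nonneg, Complex.le_def] at hpos
  simpa using hpos.1

theorem re_sum_le (hφ : IsPosDefFun φ) (h1 : φ 1 = 1) {ε : ℝ} (hε : 0 ≤ ε) {n : ℕ}
    (f : Fin n → G) (hf : ∀ i j, i < j → ‖φ (f i * (f j)⁻¹)‖ ≤ ε) :
    (∑ i, ∑ j, φ (f i * (f j)⁻¹)).re ≤ n + n ^ 2 * ε := by
  have hterm : ∀ i j, ‖φ (f i * (f j)⁻¹)‖ ≤ (if i = j then 1 else 0) + ε := by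
    intro i j
    rcases lt_trichotomy i j with hij | rfl | hij
    · simpa [hij.ne] using hf i j hij
    · simpa [h1] using hε
    · simpa [hij.ne'] using (hφ.norm_apply_mul_inv_comm _ _).trans_le (hf j i hij)
  calc (∑ i, ∑ j, φ (f i * (f j)⁻¹)).re
      ≤ ∑ i, ∑ j, ‖φ (f i * (f j)⁻¹)‖ :=
        (Complex.re_le_norm _).trans
          ((norm_sum_le _ _).trans (Finset.sum_le_sum fun i _ => norm_sum_le _ _))
    _ ≤ ∑ i : Fin n, ∑ j : Fin n, ((if i = j then 1 else 0) + ε) := by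
        gcongr with i _ j _
        exact hterm i j
    _ = n + n ^ 2 * ε := by
        simp only [Finset.sum_add_distrib, Finset.sum_ite_eq, Finset.mem_univ, ↓reduceIte,
          Finset.sum_const, Finset.card_univ, Fintype.card_fin, nsmul_eq_mul, mul_one]
        ring

theorem normSq_le_of_forall_apply_eq (hφ : IsPosDefFun φ) (h1 : φ 1 = 1) {ε : ℝ}
    (hε : 0 ≤ ε) {n : ℕ} (hn : n ≠ 0) {c : ℂ} (f : Fin n → G) (hfc : ∀ i, φ (f i) = c)
    (hf : ∀ i j, i < j → ‖φ (f i * (f j)⁻¹)‖ ≤ ε) :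
    Complex.normSq c ≤ ε + 1 / n := by
  have h := (hφ.normSq_sum_le h1 f).trans (hφ.re_sum_le h1 hε f hf)
  simp only [hfc, Finset.sum_const, Finset.card_univ, Fintype.card_fin, nsmul_eq_mul,
    Complex.normSq_mul, Complex.normSq_natCast] at h
  have hn' : (0 : ℝ) < n := by positivity
  rw [add_div' _ _ _ hn'.ne', le_div_iff₀ hn']
  nlinarith

end IsPosDefFun

namespace IsCharacter

variable {G : Type*} [Group G] {χ : G → ℂ}

theorem isPosDefFun (hχ : IsCharacter χ) : IsPosDefFun χ := hχ.2.2

theorem apply_eq_of_isConj (hχ : IsCharacter χ) {g x : G} (h : IsConj g x) : χ x = χ g := by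
  obtain ⟨u, rfl⟩ := isConj_iff.mp h
  exact hχ.2.1 g u

end IsCharacter

open Filter in
theorem vanishing_character_from_many_conjugates_general
    {G : Type*} [Group G] (χ : G → ℂ) (hχ : IsCharacter χ)
    (ε : ℝ) (hε : 0 ≤ ε) (g : G)
    (h : ∀ n : ℕ, ∃ f : Fin n → G, (∀ i, IsConj g (f i)) ∧
      ∀ i j : Fin n, i < j → ‖χ (f i * (f j)⁻¹)‖ ≤ ε) :
    ‖χ g‖ ≤ Real.sqrt ε := by
  have hbound : ∀ n : ℕ, Complex.normSq (χ g) ≤ ε + 1 / ((n : ℝ) + 1) := fun n => by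
    obtain ⟨f, hconj, hf⟩ := h (n + 1)
    exact_mod_cast hχ.isPosDefFun.normSq_le_of_forall_apply_eq hχ.1 hε n.succ_ne_zero f
      (fun i => hχ.apply_eq_of_isConj (hconj i)) hf
  have hlim : Tendsto (fun n : ℕ => ε + 1 / ((n : ℝ) + 1)) atTop (nhds ε) := by
    simpa using (tendsto_const_nhds (x := ε)).add tendsto_one_div_add_atTop_nhds_zero_nat
  rw [Complex.norm_def]
  exact Real.sqrt_le_sqrt (ge_of_tendsto' hlim hbound)

theorem vanishing_character_from_many_conjugates
    {G : Type*} [Group G] [Countable G] (χ : G → ℂ) (hχ : IsCharacter χ)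
    (ε : ℝ) (hε : 0 ≤ ε) (g : G)
    (h : ∀ n : ℕ, ∃ f : Fin n → G, (∀ i, IsConj g (f i)) ∧
      ∀ i j : Fin n, i < j → ‖χ (f i * (f j)⁻¹)‖ ≤ ε) :
    ‖χ g‖ ≤ Real.sqrt ε :=
  vanishing_character_from_many_conjugates_general χ hχ ε hε g h
end

section
/- Let G be a countable discrete group, let χ be a character on G, and let g ∈ G. If there exists an infinite sequence (gₙ) of pairwise distinct elements, each conjugate to g, such that χ(gₙ⁻¹gₘ) = 0 for all n ≠ m, then χ(g) = 0. -/
open scoped BigOperators ComplexOrder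

/-! If `χ(x) = ⟨ξ, π(x) ξ⟩` is the GNS representation of `χ`, the vectors `π(gₙ) ξ` are
orthonormal and each has inner product `χ(g)` with the unit vector `ξ`, so Bessel's inequality
gives `n ‖χ(g)‖² ≤ 1` for every `n`. Bessel's inequality is read off from positive definiteness
directly, by evaluating the form at the coefficients of `ξ - ∑ᵢ ⟨π(gᵢ) ξ, ξ⟩ π(gᵢ) ξ`. -/

open ComplexConjugate

def IsPositiveDefinite {G : Type*} [Group G] (φ : G → ℂ) : Prop :=
  ∀ (n : ℕ) (g : Fin n → G) (α : Fin n → ℂ),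
    0 ≤ ∑ i, ∑ j, conj (α i) * α j * φ ((g i)⁻¹ * g j)

namespace IsPositiveDefinite

variable {G : Type*} [Group G] {φ : G → ℂ}

theorem sum_nonneg (hφ : IsPositiveDefinite φ) {ι : Type*} [Fintype ι] (g : ι → G)
    (α : ι → ℂ) : 0 ≤ ∑ i, ∑ j, conj (α i) * α j * φ ((g i)⁻¹ * g j) := by
  let e := (Fintype.equivFin ι).symm
  simp_rw [← e.sum_comp]
  exact hφ _ (g ∘ e) (α ∘ e)

theorem map_inv (hφ : IsPositiveDefinite φ) (x : G) : φ x⁻¹ = conj (φ x) := by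
  have key (t : ℂ) : 0 ≤ φ 1 + t * φ x + conj t * φ x⁻¹ + conj t * t * φ 1 := by
    simpa [Fin.sum_univ_two, add_assoc] using hφ 2 ![1, x] ![1, t]
  -- The form is real at `t = 0, 1, I`, which pins down `Im (φ 1)`, `Im (φ x⁻¹)` and `Re (φ x⁻¹)`.
  obtain ⟨-, h0⟩ := Complex.nonneg_iff.mp (key 0)
  obtain ⟨-, h1⟩ := Complex.nonneg_iff.mp (key 1)
  obtain ⟨-, hI⟩ := Complex.nonneg_iff.mp (key Complex.I)
  simp only [zero_mul, add_zero, map_zero, mul_zero, one_mul, map_one, mul_one, Complex.add_im,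
    Complex.conj_I, neg_mul, Complex.I_mul_I, neg_neg, Complex.mul_im, Complex.I_re, Complex.I_im,
    zero_add, Complex.neg_im] at h0 h1 hI
  apply Complex.ext
  · rw [Complex.conj_re]; linarith
  · rw [Complex.conj_im]; linarith

theorem sum_norm_sq_le_one (hφ : IsPositiveDefinite φ) (h1 : φ 1 = 1) {ι : Type*} [Fintype ι]
    (x : ι → G) (hx : Pairwise fun i j => φ ((x i)⁻¹ * x j) = 0) :
    ∑ i, ‖φ (x i)‖ ^ 2 ≤ 1 := by
  have hdiag (i : ι) (β : ι → ℂ) : ∑ j, β j * φ ((x i)⁻¹ * x j) = β i := by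
    rw [Finset.sum_eq_single i (fun j _ hj => by rw [hx hj.symm, mul_zero]) (by simp)]
    simp [h1]
  have hform := hφ.sum_nonneg (fun o : Option ι => o.elim 1 x)
    (fun o => o.elim 1 fun i => -conj (φ (x i)))
  simp only [Fintype.sum_option, Option.elim, inv_one, one_mul, mul_one, h1, map_one,
    map_neg, Complex.conj_conj, mul_assoc, ← Finset.mul_sum, hdiag, hφ.map_inv] at hform
  simp only [add_neg_cancel, mul_zero, Finset.sum_const_zero, add_zero, neg_mul,
    Finset.sum_neg_distrib, mul_comm (conj _), Complex.mul_conj',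
    ← Complex.ofReal_pow, ← Complex.ofReal_sum, ← sub_eq_add_neg] at hform
  exact_mod_cast sub_nonneg.mp hform

end IsPositiveDefinite

namespace IsCharacter

variable {G : Type*} [Group G] {χ : G → ℂ}

theorem isPositiveDefinite (hχ : IsCharacter χ) : IsPositiveDefinite χ := hχ.2.2

theorem map_of_isConj (hχ : IsCharacter χ) {g h : G} (hgh : IsConj g h) : χ h = χ g := by
  obtain ⟨c, rfl⟩ := isConj_iff.mp hgh
  exact hχ.2.1 g c

end IsCharacter

theorem character_vanishes_of_orthogonal_conjugates_general
    {G : Type*} [Group G] (χ : G → ℂ) (hχ : IsCharacter χ) (g : G)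
    (f : ℕ → G)
    (hconj : ∀ n, IsConj g (f n))
    (horth : ∀ n m : ℕ, n ≠ m → χ ((f n)⁻¹ * f m) = 0) :
    χ g = 0 := by
  have hbound (n : ℕ) : n • ‖χ g‖ ^ 2 ≤ 1 := by
    have := hχ.isPositiveDefinite.sum_norm_sq_le_one hχ.1 (fun i : Fin n => f i)
      fun i j hij => horth i j (Fin.val_injective.ne hij)
    simpa [hχ.map_of_isConj (hconj _)] using this
  by_contra hne
  obtain ⟨n, hn⟩ := Archimedean.arch 2 (by positivity : 0 < ‖χ g‖ ^ 2)
  linarith [hbound n]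

theorem character_vanishes_of_orthogonal_conjugates
    {G : Type*} [Group G] [Countable G] (χ : G → ℂ) (hχ : IsCharacter χ) (g : G)
    (f : ℕ → G) (hinj : Function.Injective f)
    (hconj : ∀ n, IsConj g (f n))
    (horth : ∀ n m : ℕ, n ≠ m → χ ((f n)⁻¹ * f m) = 0) :
    χ g = 0 :=
  character_vanishes_of_orthogonal_conjugates_general χ hχ g f hconj horth
end

section
/- Let H be a subgroup of a countable discrete group G, and let x be an element of the group von Neumann algebra L(G) that commutes with L(H). Then the support of x (the set of group elements with nonzero Fourier coefficient in the expansion x = ∑_g c_g u_g) is contained in the set of elements g ∈ G whose H-conjugacy class {tgt⁻¹ : t ∈ H} is finite. -/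
/-!
Write `c = x δ_e`. For `t ∈ H`, the unitary `U t ∘ V t` sends `δ_s` to `δ_{t s t⁻¹}` and commutes
with `x`, so it fixes `c`; hence the coefficients of `c` are constant on every `H`-conjugacy class.
A nonzero constant can be taken only finitely often by a square-summable family.
-/

noncomputable section

abbrev L2 (G : Type*) := lp (fun _ : G => ℂ) 2

open Filter

namespace lp

theorem finite_setOf_le_norm {ι : Type*} {E : ι → Type*} [∀ i, NormedAddCommGroup (E i)]
    {p : ENNReal} (hp : 0 < p.toReal) (f : lp E p) {ε : ℝ} (hε : 0 < ε) :
    {i | ε ≤ ‖f i‖}.Finite := by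
  have hsum : Summable fun i => ‖f i‖ ^ p.toReal := (lp.memℓp f).summable hp
  have hsmall : ∀ᶠ i in cofinite, ‖f i‖ ^ p.toReal < ε ^ p.toReal :=
    hsum.tendsto_cofinite_zero.eventually_lt_const (Real.rpow_pos_of_pos hε _)
  refine (eventually_cofinite.mp hsmall).subset fun i hi => ?_
  exact not_lt.mpr (Real.rpow_le_rpow hε.le hi hp.le)

variable {ι 𝕜 : Type*} [RCLike 𝕜] [DecidableEq ι]

theorem apply_eq_inner_single (f : lp (fun _ : ι => 𝕜) 2) (i : ι) :
    f i = inner 𝕜 (lp.single 2 i (1 : 𝕜)) f := by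
  simp [lp.inner_single_left]

theorem apply_map_of_map_single (W : lp (fun _ : ι => 𝕜) 2 ≃ₗᵢ[𝕜] lp (fun _ : ι => 𝕜) 2)
    (σ : ι → ι) (hW : ∀ i, W (lp.single 2 i 1) = lp.single 2 (σ i) 1)
    (f : lp (fun _ : ι => 𝕜) 2) (i : ι) :
    W f (σ i) = f i := by
  rw [apply_eq_inner_single, ← hW, LinearIsometryEquiv.inner_map_map, ← apply_eq_inner_single]

end lp

/-- `x ∈ L(G)` is encoded as commutation with the right regular representation `V`, and
commutation with `L(H)` as commutation with the left translations `U t`, `t ∈ H`; the Fourier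
coefficients of `x` are the coordinates of `x δ_e`. -/
theorem support_subset_finite_conjugacy_of_commutes_general
    {G : Type*} [Group G] [DecidableEq G]
    (H : Subgroup G)
    (U V : G → (L2 G ≃ₗᵢ[ℂ] L2 G))
    (hU : ∀ t s : G, U t (lp.single 2 s (1 : ℂ)) = lp.single 2 (t * s) (1 : ℂ))
    (hV : ∀ t s : G, V t (lp.single 2 s (1 : ℂ)) = lp.single 2 (s * t⁻¹) (1 : ℂ))
    (x : L2 G →L[ℂ] L2 G)
    (hxLG : ∀ t : G, ∀ v : L2 G, x (V t v) = V t (x v))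
    (hxH : ∀ t ∈ H, ∀ v : L2 G, x (U t v) = U t (x v)) :
    {g : G | (x (lp.single 2 (1 : G) (1 : ℂ)) : ∀ _ : G, ℂ) g ≠ 0} ⊆
      {g : G | {y : G | ∃ t ∈ H, y = t * g * t⁻¹}.Finite} := by
  intro g hg
  set c := x (lp.single 2 (1 : G) (1 : ℂ))
  have hconj_single : ∀ t s, (V t).trans (U t) (lp.single 2 s 1) = lp.single 2 (t * (s * t⁻¹)) 1 :=
    fun t s => by simp [hU, hV]
  have hc_fixed : ∀ t ∈ H, (V t).trans (U t) c = c := fun t ht => by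
    simp only [c, LinearIsometryEquiv.trans_apply, ← hxLG, ← hxH t ht, hV, hU, one_mul,
      mul_inv_cancel]
  have hc_const : ∀ t ∈ H, c (t * g * t⁻¹) = c g := fun t ht => by
    rw [mul_assoc, ← lp.apply_map_of_map_single _ _ (hconj_single t) c g, hc_fixed t ht]
  refine (lp.finite_setOf_le_norm (by norm_num) c (norm_pos_iff.mpr hg)).subset ?_
  rintro _ ⟨t, ht, rfl⟩
  exact (congrArg norm (hc_const t ht)).ge

/-- If `x ∈ L(G)` (i.e. `x` commutes with the right regular representation `V`)
commutes with `L(H)` (i.e. with the left translations `U t`, `t ∈ H`), then the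
support of the Fourier expansion of `x` (the coefficients being `x δ_e`) is
contained in the set of `g ∈ G` whose `H`-conjugacy class is finite. -/
theorem support_subset_finite_conjugacy_of_commutes
    {G : Type*} [Group G] [Countable G] [DecidableEq G]
    (H : Subgroup G)
    (U V : G → (L2 G ≃ₗᵢ[ℂ] L2 G))
    (hU : ∀ t s : G, U t (lp.single 2 s (1 : ℂ)) = lp.single 2 (t * s) (1 : ℂ))
    (hV : ∀ t s : G, V t (lp.single 2 s (1 : ℂ)) = lp.single 2 (s * t⁻¹) (1 : ℂ))
    (x : L2 G →L[ℂ] L2 G)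
    (hxLG : ∀ t : G, ∀ v : L2 G, x (V t v) = V t (x v))
    (hxH : ∀ t ∈ H, ∀ v : L2 G, x (U t v) = U t (x v)) :
    {g : G | (x (lp.single 2 (1 : G) (1 : ℂ)) : ∀ _ : G, ℂ) g ≠ 0} ⊆
      {g : G | {y : G | ∃ t ∈ H, y = t * g * t⁻¹}.Finite} :=
  support_subset_finite_conjugacy_of_commutes_general H U V hU hV x hxLG hxH
end
end

section
/- Let G be a countable group that is the union of an increasing chain of subgroups G₁ ⊆ G₂ ⊆ ⋯, each of which has the non-factorizable regular character property. Then G has the non-factorizable regular character property. -/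
open scoped BigOperators ComplexOrder

open scoped Classical in
/-- The regular character of `G` is non-factorizable: whenever two characters
`φ, ψ` satisfy `φ s * ψ s = 0` for every `s ≠ 1`, one of them is `δ_e`. -/
def HasNonfactorizableRegularCharacter (G : Type*) [Group G] : Prop :=
  ∀ φ ψ : G → ℂ, IsCharacter φ → IsCharacter ψ →
    (∀ s : G, s ≠ 1 → φ s * ψ s = 0) →
    (φ = fun g => if g = 1 then 1 else 0) ∨ (ψ = fun g => if g = 1 then 1 else 0)

theorem nfrc_of_increasing_union
    {G : Type*} [Group G] [Countable G] (Gs : ℕ → Subgroup G)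
    (hmono : Monotone Gs) (hunion : ∀ g : G, ∃ n, g ∈ Gs n)
    (h : ∀ n, HasNonfactorizableRegularCharacter (Gs n)) :
    HasNonfactorizableRegularCharacter G := by
  classical
  intro φ ψ hφ hψ hzero
  by_contra hcon
  push_neg at hcon
  obtain ⟨hφne, hψne⟩ := hcon
  have hex : ∀ (χ : G → ℂ), IsCharacter χ →
      χ ≠ (fun g => if g = 1 then 1 else 0) → ∃ g : G, g ≠ 1 ∧ χ g ≠ 0 := by
    intro χ hχ hne
    by_contra h'
    push_neg at h'
    apply hne
    funext g
    by_cases hg : g = 1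
    · simp [hg, hχ.1]
    · simp [hg, h' g hg]
  obtain ⟨a, ha1, haφ⟩ := hex φ hφ hφne
  obtain ⟨b, hb1, hbψ⟩ := hex ψ hψ hψne
  obtain ⟨m, ham⟩ := hunion a
  obtain ⟨k, hbk⟩ := hunion b
  have ha : a ∈ Gs (max m k) := hmono (le_max_left m k) ham
  have hb : b ∈ Gs (max m k) := hmono (le_max_right m k) hbk
  have hres : ∀ χ : G → ℂ, IsCharacter χ → IsCharacter (fun x : Gs (max m k) => χ x) := by
    intro χ hχ
    refine ⟨by simpa using hχ.1, fun g h' => by simpa using hχ.2.1 g h', fun N g α => ?_⟩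
    have := hχ.2.2 N (fun i => (g i : G)) α
    simpa using this
  have hmain := h (max m k) (fun x => φ x) (fun x => ψ x) (hres φ hφ) (hres ψ hψ) ?_
  · rcases hmain with h1 | h1
    · have h2 := congrFun h1 ⟨a, ha⟩
      simp only at h2
      rw [if_neg (by simpa [Subtype.ext_iff] using ha1)] at h2
      exact haφ h2
    · have h2 := congrFun h1 ⟨b, hb⟩
      simp only at h2
      rw [if_neg (by simpa [Subtype.ext_iff] using hb1)] at h2
      exact hbψ h2
  · intro s hs
    exact hzero (s : G) fun hc => hs (by ext; exact hc)
end

section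
/- Suppose that for any characters φ, ψ on F₂ with φ(g)ψ(g) = 0 for all g ≠ e and with ker(φ) = ker(ψ) = {e}, one has φ = δ_e or ψ = δ_e. Then F₂ has the non-factorizable regular character property (the same conclusion without the kernel assumption). -/
open scoped BigOperators ComplexOrder

/-!
Averaging with `δ_e` reduces the general case to the trivial-kernel case, in any group.
The map `χ ↦ (χ + δ_e) / 2` sends characters to characters, keeps `φ ψ` vanishing off `e`,
and fixes only `δ_e`. Its image has trivial kernel: `Re χ ≤ 1` for every character, so
`(χ g + δ_e g) / 2 = 1` with `g ≠ e` would force `χ g = 2`.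
-/

open Complex ComplexConjugate Finset

variable {G : Type*} [Group G]

namespace IsCharacter

variable {χ : G → ℂ}

lemma nonneg_two (hχ : IsCharacter χ) (g : G) (a b : ℂ) :
    0 ≤ conj a * a + conj a * b * χ g + conj b * a * χ g⁻¹ + conj b * b := by
  simpa [Fin.sum_univ_two, hχ.1, add_assoc] using hχ.2.2 2 ![1, g] ![a, b]

lemma map_inv (hχ : IsCharacter χ) (g : G) : χ g⁻¹ = conj (χ g) := by
  -- the forms at `(1, 1)` and `(1, I)` are real
  have h₁ := (le_def.mp (hχ.nonneg_two g 1 1)).2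
  have h₂ := (le_def.mp (hχ.nonneg_two g 1 I)).2
  simp only [zero_im, map_one, mul_one, one_mul, add_im, one_im, zero_add, add_zero, conj_I,
    neg_mul, I_mul_I, neg_neg, mul_im, I_re, zero_mul, I_im, neg_im] at h₁ h₂
  apply Complex.ext <;> simp only [conj_re, conj_im] <;> linarith

lemma re_le_one (hχ : IsCharacter χ) (g : G) : (χ g).re ≤ 1 := by
  have h := (le_def.mp (hχ.nonneg_two g 1 (-1))).1
  simp only [zero_re, map_one, mul_one, mul_neg, neg_mul, one_mul, map_neg, hχ.map_inv g,
    neg_neg, add_re, one_re, neg_re, conj_re] at h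
  linarith

lemma midpoint {φ ψ : G → ℂ} (hφ : IsCharacter φ) (hψ : IsCharacter ψ) :
    IsCharacter fun g => (φ g + ψ g) / 2 := by
  refine ⟨by simp [hφ.1, hψ.1], fun g h => by simp only [hφ.2.1, hψ.2.1], fun n g α => ?_⟩
  have hsum := add_nonneg (hφ.2.2 n g α) (hψ.2.2 n g α)
  simp only [← sum_add_distrib, ← mul_add] at hsum
  simp only [mul_div_assoc', ← sum_div]
  exact div_nonneg hsum (by norm_num)

end IsCharacter

section Regular

variable [DecidableEq G]

variable (G) in
def regularCharacter : G → ℂ := fun g => if g = 1 then 1 else 0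

lemma isCharacter_regularCharacter : IsCharacter (regularCharacter G) := by
  refine ⟨by simp [regularCharacter], fun g h => by simp [regularCharacter], fun n g α => ?_⟩
  set β : G → ℂ := fun x => ∑ i with g i = x, α i
  calc (0 : ℂ) ≤ ∑ x ∈ univ.image g, conj (β x) * β x :=
        sum_nonneg fun x _ => star_mul_self_nonneg _
    _ = ∑ x ∈ univ.image g, ∑ i with g i = x, ∑ j with g j = x, conj (α i) * α j := by
        simp only [β, map_sum, sum_mul_sum]
    _ = ∑ i, ∑ j, conj (α i) * α j * regularCharacter G ((g i)⁻¹ * g j) := by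
        rw [← sum_fiberwise_of_maps_to (g := g) (t := univ.image g) (by simp)]
        refine sum_congr rfl fun x _ => sum_congr rfl fun i hi => ?_
        rw [(mem_filter.mp hi).2.symm, sum_filter]
        simp [regularCharacter, inv_mul_eq_one, eq_comm]

lemma IsCharacter.setOf_midpoint_regularCharacter_eq_one {χ : G → ℂ} (hχ : IsCharacter χ) :
    {g | (χ g + regularCharacter G g) / 2 = 1} = {1} := by
  ext g
  rcases eq_or_ne g 1 with rfl | hg
  · simp [hχ.1, regularCharacter]
  · have hχg : χ g ≠ 2 := fun h => by simpa [h] using hχ.re_le_one g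
    simp [regularCharacter, hg, div_eq_iff, hχg]

lemma midpoint_regularCharacter_eq_regularCharacter_iff {χ : G → ℂ} :
    (fun g => (χ g + regularCharacter G g) / 2) = regularCharacter G ↔
      χ = regularCharacter G := by
  refine ⟨fun h => funext fun g => ?_, fun h => by simp [h]⟩
  have hg := congrFun h g
  rcases eq_or_ne g 1 with rfl | hg1
  · have h1 : χ 1 + 1 = 2 := by simpa [regularCharacter, div_eq_iff] using hg
    simp only [regularCharacter, if_true]
    linear_combination h1
  · simpa [regularCharacter, hg1] using hg

theorem hasNonfactorizableRegularCharacter_of_trivial_kernel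
    (h : ∀ φ ψ : G → ℂ, IsCharacter φ → IsCharacter ψ → (∀ g, g ≠ 1 → φ g * ψ g = 0) →
      {g | φ g = 1} = {1} → {g | ψ g = 1} = {1} →
      φ = regularCharacter G ∨ ψ = regularCharacter G) :
    HasNonfactorizableRegularCharacter G := by
  intro φ ψ hφ hψ hφψ
  have hδ := isCharacter_regularCharacter (G := G)
  have hmul : ∀ g, g ≠ 1 →
      (φ g + regularCharacter G g) / 2 * ((ψ g + regularCharacter G g) / 2) = 0 := by
    intro g hg
    simp [regularCharacter, hg, div_mul_div_comm, hφψ g hg]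
  have key := h _ _ (hφ.midpoint hδ) (hψ.midpoint hδ) hmul
    hφ.setOf_midpoint_regularCharacter_eq_one hψ.setOf_midpoint_regularCharacter_eq_one
  rw [midpoint_regularCharacter_eq_regularCharacter_iff,
    midpoint_regularCharacter_eq_regularCharacter_iff] at key
  unfold regularCharacter at key
  convert key

end Regular

open scoped Classical in
theorem freeGroup_nfrc_of_trivial_kernel_case
    (h : ∀ φ ψ : FreeGroup (Fin 2) → ℂ, IsCharacter φ → IsCharacter ψ →
      (∀ g : FreeGroup (Fin 2), g ≠ 1 → φ g * ψ g = 0) →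
      ({g : FreeGroup (Fin 2) | φ g = 1} = {1}) →
      ({g : FreeGroup (Fin 2) | ψ g = 1} = {1}) →
      (φ = fun g => if g = 1 then 1 else 0) ∨ (ψ = fun g => if g = 1 then 1 else 0)) :
    HasNonfactorizableRegularCharacter (FreeGroup (Fin 2)) :=
  hasNonfactorizableRegularCharacter_of_trivial_kernel h
end

section
/- Let G = H ≀_I K = (⊕_I H) ⋊ K be a generalized wreath product, where H is a non-abelian simple group, K acts faithfully and transitively on a non-empty set I. Then every non-trivial normal subgroup N of G contains ⊕_I H; consequently N = (⊕_I H) ⋊ K₀ for some normal subgroup K₀ of K. -/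
noncomputable section

variable (K I H : Type*) [Group K] [Group H] [MulAction K I]

/-- The action of `K` on `I → H` by permuting coordinates via the action on `I`. -/
def wreathAct : K →* MulAut (I → H) where
  toFun k := MulEquiv.arrowCongr (MulAction.toPerm k) (MulEquiv.refl H)
  map_one' := by
    refine MulEquiv.ext fun f => funext fun i => ?_
    show f ((1 : K)⁻¹ • i) = f i
    simp
  map_mul' a b := by
    refine MulEquiv.ext fun f => funext fun i => ?_
    show f ((a * b)⁻¹ • i) = f (b⁻¹ • a⁻¹ • i)
    rw [mul_inv_rev, mul_smul]

/-- The full (unrestricted) wreath product `(I → H) ⋊ K`. -/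
abbrev FullWreath : Type _ := SemidirectProduct (I → H) K (wreathAct K I H)

/-- The generalized wreath product `H ≀_I K = (⊕_I H) ⋊ K`: the subgroup of the
full wreath product of elements whose base component is finitely supported. -/
def RestrictedWreath : Subgroup (FullWreath K I H) where
  carrier := {x | (Function.mulSupport x.left).Finite}
  one_mem' := by simp [SemidirectProduct.one_left]
  mul_mem' := by
    intro a b ha hb
    have h1 : (a * b).left = a.left * wreathAct K I H a.right b.left := rfl
    have h2 : Function.mulSupport (wreathAct K I H a.right b.left) =
        (fun i : I => a.right⁻¹ • i) ⁻¹' Function.mulSupport b.left := rfl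
    show (Function.mulSupport (a * b).left).Finite
    rw [h1]
    refine Set.Finite.subset (Set.Finite.union ha ?_) (Function.mulSupport_mul _ _)
    rw [h2]
    exact hb.preimage (MulAction.injective _).injOn
  inv_mem' := by
    intro a ha
    have h2 : Function.mulSupport (a⁻¹).left =
        (fun i : I => (a.right⁻¹)⁻¹ • i) ⁻¹' Function.mulSupport a.left⁻¹ := rfl
    show (Function.mulSupport (a⁻¹).left).Finite
    rw [h2, Function.mulSupport_inv]
    exact ha.preimage (MulAction.injective _).injOn

/-- The copy of `⊕_I H` inside the generalized wreath product. -/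
def baseSubgroup : Subgroup ↥(RestrictedWreath K I H) where
  carrier := {x | (x : FullWreath K I H).right = 1}
  one_mem' := rfl
  mul_mem' := by
    intro a b ha hb
    show ((a : FullWreath K I H) * b).right = 1
    rw [SemidirectProduct.mul_right]
    simp only [Set.mem_setOf_eq] at ha hb
    rw [ha, hb, mul_one]
  inv_mem' := by
    intro a ha
    show ((a : FullWreath K I H)⁻¹).right = 1
    rw [SemidirectProduct.inv_right]
    simp only [Set.mem_setOf_eq] at ha
    rw [ha, inv_one]


/-!
A non-trivial `k ∈ K` moves some point of `I`, so it fails to commute with a suitable element of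
`⊕_I H` supported at that point: the base contains its own centralizer. A normal subgroup `N`
meeting the base trivially would commute with it, so a non-trivial `N` contains a non-trivial base
element `n`. If `n i` is not central in `H`, the commutator of `n` with a suitable element of the
`i`-th copy of `H` is a non-trivial element of that copy, so by simplicity `N` contains the whole
copy; conjugating by `K` moves it to every coordinate, and these copies generate the base. Finally,
a normal subgroup containing the kernel `⊕_I H` of `G → K` is the preimage of its image in `K`.
-/

open Function
open scoped commutatorElement

theorem IsSimpleGroup.center_eq_bot_of_exists_mul_ne_mul {G : Type*} [Group G] [IsSimpleGroup G]
    (hG : ∃ a b : G, a * b ≠ b * a) : Subgroup.center G = ⊥ := by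
  refine (Subgroup.center G).normal_of_characteristic.eq_bot_or_eq_top.resolve_right
    fun htop => ?_
  obtain ⟨a, b, hab⟩ := hG
  exact hab ((Subgroup.mem_center_iff.mp (htop ▸ Subgroup.mem_top b)) a)

theorem Pi.commutatorElement_mulSingle {ι G : Type*} [Group G] [DecidableEq ι] (i : ι) (a : G)
    (f : ι → G) : ⁅(Pi.mulSingle i a : ι → G), f⁆ = Pi.mulSingle i ⁅a, f i⁆ := by
  funext j
  rcases eq_or_ne j i with rfl | hj
  · simp [commutatorElement_def]
  · simp [commutatorElement_def, hj]

section

variable {K I H}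

lemma wreathAct_apply (k : K) (f : I → H) (i : I) : wreathAct K I H k f i = f (k⁻¹ • i) :=
  rfl

lemma wreathAct_mulSingle [DecidableEq I] (k : K) (i : I) (a : H) :
    wreathAct K I H k (Pi.mulSingle i a) = Pi.mulSingle (k • i) a := by
  funext j
  simp only [wreathAct_apply, Pi.mulSingle_apply, inv_smul_eq_iff]

namespace RestrictedWreath

lemma finite_mulSupport_left (x : RestrictedWreath K I H) :
    (mulSupport (x : FullWreath K I H).left).Finite :=
  x.2

variable (K I H) in
def rightHom : RestrictedWreath K I H →* K :=
  SemidirectProduct.rightHom.comp (RestrictedWreath K I H).subtype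

lemma rightHom_apply (x : RestrictedWreath K I H) :
    rightHom K I H x = (x : FullWreath K I H).right := rfl

lemma baseSubgroup_eq_ker : baseSubgroup K I H = (rightHom K I H).ker := rfl

instance : (baseSubgroup K I H).Normal :=
  baseSubgroup_eq_ker (K := K) (I := I) (H := H) ▸ inferInstance

lemma coe_eq_inl_of_mem_baseSubgroup {x : RestrictedWreath K I H} (hx : x ∈ baseSubgroup K I H) :
    (x : FullWreath K I H) = SemidirectProduct.inl (x : FullWreath K I H).left := by
  rw [← SemidirectProduct.inl_left_mul_inr_right (x : FullWreath K I H)]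
  simp [show (x : FullWreath K I H).right = 1 from hx]

variable (K I H) in
def inr : K →* RestrictedWreath K I H :=
  SemidirectProduct.inr.codRestrict _ fun _ => by
    simp [RestrictedWreath]

lemma coe_inr (k : K) : (inr K I H k : FullWreath K I H) = SemidirectProduct.inr k := rfl

lemma rightHom_surjective : Surjective (rightHom K I H) :=
  fun k => ⟨inr K I H k, rfl⟩

section single

variable [DecidableEq I]

variable (K H) in
def single (i : I) : H →* RestrictedWreath K I H :=
  (SemidirectProduct.inl.comp (MonoidHom.mulSingle (fun _ => H) i)).codRestrict _ fun a =>
    (Set.finite_singleton i).subset (Pi.mulSupport_mulSingle_subset (a := a))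

lemma coe_single (i : I) (a : H) :
    (single K H i a : FullWreath K I H) = SemidirectProduct.inl (Pi.mulSingle i a) := rfl

lemma single_mem_baseSubgroup (i : I) (a : H) : single K H i a ∈ baseSubgroup K I H := rfl

lemma inr_mul_single_mul_inv (k : K) (i : I) (a : H) :
    inr K I H k * single K H i a * (inr K I H k)⁻¹ = single K H (k • i) a := by
  ext1
  rw [Subgroup.coe_mul, Subgroup.coe_mul, Subgroup.coe_inv, coe_inr, coe_single, coe_single,
    ← map_inv, ← wreathAct_mulSingle k i a, SemidirectProduct.inl_aut]

lemma commutatorElement_single {n : RestrictedWreath K I H} (hn : n ∈ baseSubgroup K I H)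
    (i : I) (a : H) :
    ⁅single K H i a, n⁆ = single K H i ⁅a, (n : FullWreath K I H).left i⁆ := by
  ext1
  change (RestrictedWreath K I H).subtype ⁅single K H i a, n⁆ = _
  rw [map_commutatorElement, Subgroup.coe_subtype, coe_single, coe_single,
    coe_eq_inl_of_mem_baseSubgroup hn, ← map_commutatorElement, SemidirectProduct.left_inl,
    Pi.commutatorElement_mulSingle]

lemma centralizer_baseSubgroup_le [FaithfulSMul K I] [Nontrivial H] :
    Subgroup.centralizer (baseSubgroup K I H) ≤ baseSubgroup K I H := by
  intro x hx
  by_contra hr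
  obtain ⟨i, hi⟩ : ∃ i : I, (x : FullWreath K I H).right • i ≠ i := by
    by_contra! hfix
    exact hr (FaithfulSMul.eq_of_smul_eq_smul fun i => by rw [hfix i, one_smul])
  obtain ⟨a, ha⟩ := exists_ne (1 : H)
  have hcomm : single K H i a * x = x * single K H i a :=
    Subgroup.mem_centralizer_iff.mp hx _ (single_mem_baseSubgroup i a)
  -- At the coordinate `x.right • i`, only the right-hand side sees the value `a`.
  have := congrArg (fun y : RestrictedWreath K I H => (y : FullWreath K I H).left
    ((x : FullWreath K I H).right • i)) hcomm
  exact ha (by simpa [coe_single, wreathAct_apply, Pi.mulSingle_apply, hi] using this)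

lemma exists_single_mem_of_inf_baseSubgroup_ne_bot (hH : Subgroup.center H = ⊥)
    {N : Subgroup (RestrictedWreath K I H)} [N.Normal] (hN : N ⊓ baseSubgroup K I H ≠ ⊥) :
    ∃ (i : I) (c : H), c ≠ 1 ∧ single K H i c ∈ N := by
  obtain ⟨⟨n, hnN, hnbase⟩, hn1⟩ := Subgroup.ne_bot_iff_exists_ne_one.mp hN
  obtain ⟨i, hi⟩ : ∃ i, (n : FullWreath K I H).left i ≠ 1 := by
    by_contra! hleft
    refine hn1 (Subtype.ext (Subtype.ext ?_))
    rw [coe_eq_inl_of_mem_baseSubgroup hnbase, funext hleft]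
    rfl
  obtain ⟨a, ha⟩ : ∃ a : H, ⁅a, (n : FullWreath K I H).left i⁆ ≠ 1 := by
    have : (n : FullWreath K I H).left i ∉ Subgroup.center H := by rwa [hH, Subgroup.mem_bot]
    simpa [Subgroup.mem_center_iff, commutatorElement_eq_one_iff_mul_comm] using this
  refine ⟨i, _, ha, commutatorElement_single hnbase i a ▸ ?_⟩
  exact Subgroup.commutator_le_right _ _
    (Subgroup.commutator_mem_commutator (Subgroup.mem_top _) hnN)

lemma range_single_le_of_single_mem [IsSimpleGroup H] {N : Subgroup (RestrictedWreath K I H)}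
    [N.Normal] {i : I} {c : H} (hc : c ≠ 1) (hcN : single K H i c ∈ N) :
    (single K H i).range ≤ N := by
  have htop : N.comap (single K H i) = ⊤ :=
    (‹N.Normal›.comap (single K H i)).eq_bot_or_eq_top.resolve_left fun hbot =>
      hc ((Subgroup.eq_bot_iff_forall _).mp hbot c hcN)
  rw [MonoidHom.range_eq_map, Subgroup.map_le_iff_le_comap, htop]

lemma single_mem_of_range_single_le [MulAction.IsPretransitive K I]
    {N : Subgroup (RestrictedWreath K I H)} [N.Normal] {i : I} (hN : (single K H i).range ≤ N)
    (j : I) (a : H) : single K H j a ∈ N := by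
  obtain ⟨k, rfl⟩ := MulAction.exists_smul_eq K i j
  rw [← inr_mul_single_mul_inv]
  exact Subgroup.Normal.conj_mem ‹_› _ (hN ⟨a, rfl⟩) _

lemma baseSubgroup_le_of_single_mem {N : Subgroup (RestrictedWreath K I H)}
    (hN : ∀ i a, single K H i a ∈ N) : baseSubgroup K I H ≤ N := by
  intro x hx
  have hleft : (x : FullWreath K I H).left ∈
      (N.map (RestrictedWreath K I H).subtype).comap SemidirectProduct.inl :=
    Submonoid.pi_mem_of_mulSingle_mem_aux
      (finite_mulSupport_left x).toFinset _ (by simp) fun i _ => ⟨_, hN i _, rfl⟩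
  obtain ⟨y, hyN, hyx⟩ := hleft
  rwa [← Subtype.ext (hyx.trans (coe_eq_inl_of_mem_baseSubgroup hx).symm)]

lemma inf_baseSubgroup_ne_bot [FaithfulSMul K I] [Nontrivial H]
    {N : Subgroup (RestrictedWreath K I H)} [N.Normal] (hN : N ≠ ⊥) :
    N ⊓ baseSubgroup K I H ≠ ⊥ := by
  intro hbot
  have hcent : N ≤ Subgroup.centralizer (baseSubgroup K I H) :=
    Subgroup.commutator_eq_bot_iff_le_centralizer.mp
      (le_bot_iff.mp (hbot ▸ Subgroup.commutator_le_inf _ _))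
  rw [← inf_eq_left.mpr (hcent.trans centralizer_baseSubgroup_le), hbot] at hN
  exact hN rfl

end single

end RestrictedWreath

end

open RestrictedWreath

theorem base_le_of_normal_nontrivial
    [FaithfulSMul K I] [MulAction.IsPretransitive K I]
    [IsSimpleGroup H] (hH : ∃ a b : H, a * b ≠ b * a)
    (N : Subgroup ↥(RestrictedWreath K I H)) (hN : N.Normal) (hNne : N ≠ ⊥) :
    baseSubgroup K I H ≤ N ∧
      ∃ K₀ : Subgroup K, K₀.Normal ∧
        ∀ x : ↥(RestrictedWreath K I H), x ∈ N ↔ (x : FullWreath K I H).right ∈ K₀ := by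
  classical
  obtain ⟨i, c, hc, hcN⟩ := exists_single_mem_of_inf_baseSubgroup_ne_bot
    (IsSimpleGroup.center_eq_bot_of_exists_mul_ne_mul hH) (inf_baseSubgroup_ne_bot hNne)
  have hbase : baseSubgroup K I H ≤ N :=
    baseSubgroup_le_of_single_mem <|
      single_mem_of_range_single_le (range_single_le_of_single_mem hc hcN)
  refine ⟨hbase, N.map (rightHom K I H), hN.map _ rightHom_surjective, fun x => ?_⟩
  rw [← rightHom_apply, ← Subgroup.mem_comap, Subgroup.comap_map_eq, ← baseSubgroup_eq_ker,
    sup_eq_left.mpr hbase]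
end
end

section
/- Let G be a countable group acting faithfully by homeomorphisms on a Hausdorff topological space X such that for every non-empty open set A ⊆ X there exists t ∈ G with ∅ ≠ supp(t) ⊆ A (where supp(t) = {x : tx ≠ x}). Let g ∈ G have finite order and let h ∈ G be an element that does not preserve the orbits of g, i.e., there exists y ∈ X with hy ∉ {gˡy : l ∈ ℤ}. Then the set {t⁻¹ht : t ∈ C_G(g)} is infinite, where C_G(g) is the centralizer of g in G. -/
section Aux

variable {G X : Type*} [Group G] [MulAction G X]

private lemma commute_of_disjoint [FaithfulSMul G X] {a b : G}
    (hab : ∀ x : X, a • x = x ∨ b • x = x) : a * b = b * a := by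
  apply eq_of_smul_eq_smul (α := X)
  intro x
  rw [mul_smul, mul_smul]
  by_cases hax : a • x = x
  · by_cases hbx : b • x = x
    · rw [hbx, hax, hbx]
    · have h1 : a • (b • x) = b • x := by
        rcases hab (b • x) with h | h
        · exact h
        · exact absurd (MulAction.injective b h) hbx
      rw [h1, hax]
  · have hbx : b • x = x := (hab x).resolve_left hax
    have h2 : b • (a • x) = a • x := by
      rcases hab (a • x) with h | h
      · exact absurd (MulAction.injective a h) hax
      · exact h
    rw [hbx, h2]

private lemma prodfix (b : ℕ → G) (k : ℕ) (x : X) (hfix : ∀ l, l < k → b l • x = x) :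
    (((List.range k).map b).prod) • x = x := by
  induction k with
  | zero => simp
  | succ k ih =>
    rw [List.prod_range_succ, mul_smul, hfix k (Nat.lt_succ_self k),
      ih (fun l hl => hfix l (hl.trans (Nat.lt_succ_self k)))]

private lemma s_spec [FaithfulSMul G X]
    (g t : G) (d : ℕ) (hd : 0 < d) (V U : Set X)
    (hVU : V ⊆ U) (hU : ∀ x ∈ U, g ^ d • x = x)
    (hsupp : ∀ x : X, t • x ≠ x → x ∈ V)
    (hVdisj : ∀ m, 0 < m → m < d → ∀ x ∈ V, g ^ m • x ∉ V) :
    (((List.range d).map (fun l => g ^ l * t * (g ^ l)⁻¹)).prod * g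
       = g * ((List.range d).map (fun l => g ^ l * t * (g ^ l)⁻¹)).prod) ∧
    (∀ x : X, (∀ l, l < d → t • ((g ^ l)⁻¹ • x) = (g ^ l)⁻¹ • x) →
      ((List.range d).map (fun l => g ^ l * t * (g ^ l)⁻¹)).prod • x = x) ∧
    (∀ x ∈ V, ((List.range d).map (fun l => g ^ l * t * (g ^ l)⁻¹)).prod • x = t • x) := by
  set a : ℕ → G := fun l => g ^ l * t * (g ^ l)⁻¹ with ha
  have ha_smul : ∀ (l : ℕ) (x : X), a l • x = g ^ l • t • (g ^ l)⁻¹ • x := by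
    intro l x; rw [ha]; simp [mul_smul]
  have hafix : ∀ (l : ℕ) (x : X), t • ((g ^ l)⁻¹ • x) = (g ^ l)⁻¹ • x → a l • x = x := by
    intro l x hl; rw [ha_smul, hl, smul_inv_smul]
  have hamove : ∀ (l : ℕ) (x : X), a l • x ≠ x → (g ^ l)⁻¹ • x ∈ V := by
    intro l x hl
    by_contra hnot
    apply hl
    apply hafix
    by_contra hmoved
    exact hnot (hsupp _ hmoved)
  have ha0 : ∀ x : X, a 0 • x = t • x := by
    intro x; rw [ha]; simp
  have htV : ∀ x : X, t • x ≠ x → t • x ∈ V := by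
    intro x hx
    apply hsupp
    intro hc
    exact hx (MulAction.injective t hc)
  have had : a d = a 0 := by
    apply eq_of_smul_eq_smul (α := X)
    intro x
    rw [ha0, ha_smul]
    by_cases hxU : x ∈ U
    · have h1 : (g ^ d)⁻¹ • x = x := by rw [inv_smul_eq_iff]; exact (hU x hxU).symm
      rw [h1]
      by_cases hxt : t • x = x
      · rw [hxt]; exact hU x hxU
      · exact hU _ (hVU (htV x hxt))
    · have h2 : (g ^ d)⁻¹ • x ∉ U := by
        intro hw
        apply hxU
        have := hU _ hw
        rw [smul_inv_smul] at this
        rw [this]; exact hw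
      have h3 : t • ((g ^ d)⁻¹ • x) = (g ^ d)⁻¹ • x := by
        by_contra hc
        exact h2 (hVU (hsupp _ hc))
      have h4 : t • x = x := by
        by_contra hc
        exact hxU (hVU (hsupp _ hc))
      rw [h3, smul_inv_smul, h4]
  have hcomm : ∀ i j, i < j → j < d → Commute (a i) (a j) := by
    intro i j hij hjd
    apply commute_of_disjoint (X := X)
    intro x
    by_contra hc
    push_neg at hc
    obtain ⟨hi, hj⟩ := hc
    have hvi : (g ^ i)⁻¹ • x ∈ V := hamove i x hi
    have hvj : (g ^ j)⁻¹ • x ∈ V := hamove j x hj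
    have hkey : g ^ (j - i) • ((g ^ j)⁻¹ • x) = (g ^ i)⁻¹ • x := by
      have hij' : g ^ i * g ^ (j - i) = g ^ j := by
        rw [← pow_add, Nat.add_sub_cancel' hij.le]
      have h5 : g ^ (j - i) * (g ^ j)⁻¹ = (g ^ i)⁻¹ := by rw [← hij']; group
      rw [smul_smul, h5]
    exact hVdisj (j - i) (by omega) (by omega) _ hvj (hkey ▸ hvi)
  obtain ⟨m, rfl⟩ : ∃ m, d = m + 1 := ⟨d - 1, (Nat.succ_pred_eq_of_pos hd).symm⟩
  have hQcomm : Commute (a 0) (((List.range m).map fun i => a (i + 1)).prod) := by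
    apply Commute.list_prod_right
    intro y hy
    simp only [List.mem_map, List.mem_range] at hy
    obtain ⟨i, hi, rfl⟩ := hy
    exact hcomm 0 (i + 1) (Nat.succ_pos i) (by omega)
  have hconjprod : ∀ L : List G, g * L.prod * g⁻¹ = (L.map fun x => g * x * g⁻¹).prod := by
    intro L
    induction L with
    | nil => simp
    | cons x L ih => simp only [List.prod_cons, List.map_cons]; rw [← ih]; group
  refine ⟨?_, ?_, ?_⟩
  · have key : g * ((List.range (m + 1)).map a).prod * g⁻¹ = ((List.range (m + 1)).map a).prod := by
      rw [hconjprod, List.map_map]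
      have hmapeq : ((fun x => g * x * g⁻¹) ∘ a) = fun l => a (l + 1) := by
        funext l
        show g * (g ^ l * t * (g ^ l)⁻¹) * g⁻¹ = g ^ (l + 1) * t * (g ^ (l + 1))⁻¹
        rw [pow_succ']
        group
      rw [hmapeq, List.prod_range_succ, had, ← hQcomm, ← List.prod_range_succ']
    have key2 := congrArg (fun w => w * g) key
    simp only [inv_mul_cancel_right] at key2
    exact key2.symm
  · intro x hx
    exact prodfix a (m + 1) x (fun l hl => hafix l x (hx l hl))
  · intro x hxV
    rw [List.prod_range_succ', mul_smul]
    have hQ : (((List.range m).map fun i => a (i + 1)).prod) • x = x := by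
      apply prodfix
      intro l hl
      apply hafix
      by_contra hc
      have hv : (g ^ (l + 1))⁻¹ • x ∈ V := hsupp _ hc
      have := hVdisj (l + 1) (Nat.succ_pos l) (by omega) _ hv
      rw [smul_inv_smul] at this
      exact this hxV
    rw [hQ, ha0]

end Aux

theorem infinitely_many_conjugates_by_centralizer
    {G X : Type*} [Group G] [Countable G]
    [TopologicalSpace X] [T2Space X]
    [MulAction G X] [FaithfulSMul G X]
    (hcont : ∀ g : G, Continuous (fun x : X => g • x))
    (hfill : ∀ A : Set X, IsOpen A → A.Nonempty →
      ∃ t : G, {x : X | t • x ≠ x}.Nonempty ∧ {x : X | t • x ≠ x} ⊆ A)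
    (g h : G) (hg : IsOfFinOrder g)
    (hy : ∃ y : X, ∀ l : ℤ, h • y ≠ (g ^ l) • y) :
    {c : G | ∃ t ∈ Subgroup.centralizer {g}, c = t⁻¹ * h * t}.Infinite := by
  classical
  obtain ⟨y, hy⟩ := hy
  set n := orderOf g with hn_def
  have hn : 0 < n := hg.orderOf_pos
  have hgn : g ^ n = 1 := pow_orderOf_eq_one g
  have hyl : ∀ l : ℕ, h • y ≠ g ^ l • y := by
    intro l
    have := hy (l : ℤ)
    rwa [zpow_natCast] at this
  -- separating neighborhoods around y
  have sepW : ∀ l : ℕ, ∃ p : Set X × Set X, IsOpen p.1 ∧ IsOpen p.2 ∧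
      h • y ∈ p.1 ∧ g ^ l • y ∈ p.2 ∧ Disjoint p.1 p.2 := by
    intro l
    obtain ⟨A, B, hA, hB, h1, h2, hAB⟩ := t2_separation (hyl l)
    exact ⟨(A, B), hA, hB, h1, h2, hAB⟩
  choose AB hABo1 hABo2 hABm1 hABm2 hABd using sepW
  set W : Set X := ⋂ l ∈ Finset.range n,
      ((fun x : X => h • x) ⁻¹' (AB l).1 ∩ (fun x : X => g ^ l • x) ⁻¹' (AB l).2) with hW_def
  have hWopen : IsOpen W := by
    apply isOpen_biInter_finset
    intro l _
    exact ((hABo1 l).preimage (hcont h)).inter ((hABo2 l).preimage (hcont (g ^ l)))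
  have hWy : y ∈ W := by
    rw [hW_def]
    refine Set.mem_iInter₂.mpr fun l _ => ⟨hABm1 l, hABm2 l⟩
  have hW : ∀ x ∈ W, ∀ l, l < n → h • x ≠ g ^ l • x := by
    intro x hx l hl heq
    have hmem := Set.mem_iInter₂.mp hx l (Finset.mem_range.mpr hl)
    refine Set.disjoint_left.mp (hABd l) hmem.1 ?_
    show h • x ∈ (AB l).2
    rw [heq]; exact hmem.2
  -- minimal d such that g^d acts trivially on some nonempty open subset of W
  have hex : ∃ m : ℕ, 0 < m ∧ ∃ U : Set X, IsOpen U ∧ U.Nonempty ∧ U ⊆ W ∧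
      ∀ x ∈ U, g ^ m • x = x :=
    ⟨n, hn, W, hWopen, ⟨y, hWy⟩, subset_rfl, fun x _ => by rw [hgn, one_smul]⟩
  set d := Nat.find hex with hd_def
  obtain ⟨hd, U, hUopen, hUne, hUW, hUfix⟩ := Nat.find_spec hex
  have hdn : d ≤ n := Nat.find_min' hex ⟨hn, W, hWopen, ⟨y, hWy⟩, subset_rfl,
    fun x _ => by rw [hgn, one_smul]⟩
  -- shrink to points of exact period d
  have shrink : ∀ k, k < d → ∃ O : Set X, IsOpen O ∧ O.Nonempty ∧ O ⊆ U ∧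
      ∀ x ∈ O, ∀ m, 0 < m → m ≤ k → g ^ m • x ≠ x := by
    intro k
    induction k with
    | zero => exact fun _ => ⟨U, hUopen, hUne, subset_rfl, fun x _ m hm hm0 => by omega⟩
    | succ k ih =>
      intro hk
      obtain ⟨O, hOo, hOne, hOU, hOper⟩ := ih (by omega)
      refine ⟨O ∩ {x | g ^ (k + 1) • x ≠ x}, ?_, ?_, fun x hx => hOU hx.1, ?_⟩
      · exact hOo.inter (isClosed_eq (hcont (g ^ (k + 1))) continuous_id).isOpen_compl
      · by_contra hne
        rw [Set.not_nonempty_iff_eq_empty] at hne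
        have hall : ∀ x ∈ O, g ^ (k + 1) • x = x := by
          intro x hx
          by_contra hc
          exact absurd (Set.mem_inter hx hc) (hne ▸ Set.notMem_empty x)
        exact Nat.find_min hex hk ⟨Nat.succ_pos k, O, hOo, hOne, hOU.trans hUW, hall⟩
      · rintro x ⟨hxO, hxk⟩ m hm hmk
        rcases Nat.lt_succ_iff_lt_or_eq.mp (Nat.lt_succ_of_le hmk) with hlt | rfl
        · exact hOper x hxO m hm (by omega)
        · exact hxk
  obtain ⟨O, hOo, ⟨z, hzO⟩, hOU, hOper⟩ := shrink (d - 1) (by omega)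
  have hzU : z ∈ U := hOU hzO
  have hzmove : ∀ m, 0 < m → m < d → g ^ m • z ≠ z := fun m h1 h2 =>
    hOper z hzO m h1 (by omega)
  have hzh : ∀ l, l < d → g ^ l • z ≠ h • z := fun l hl =>
    fun heq => hW z (hUW hzU) l (by omega) heq.symm
  -- build V
  have sepE : ∀ l : ℕ, ∃ A B : Set X, IsOpen A ∧ IsOpen B ∧
      (l + 1 < d → z ∈ A ∧ g ^ (l + 1) • z ∈ B ∧ Disjoint A B) := by
    intro l
    by_cases hld : l + 1 < d
    · obtain ⟨A, B, hA, hB, h1, h2, hAB⟩ :=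
        t2_separation (Ne.symm (hzmove (l + 1) (Nat.succ_pos l) hld))
      exact ⟨A, B, hA, hB, fun _ => ⟨h1, h2, hAB⟩⟩
    · exact ⟨∅, ∅, isOpen_empty, isOpen_empty, fun hc => absurd hc hld⟩
  choose E F hEo hFo hEF using sepE
  have sepC : ∀ l : ℕ, ∃ A B : Set X, IsOpen A ∧ IsOpen B ∧
      (l < d → g ^ l • z ∈ A ∧ h • z ∈ B ∧ Disjoint A B) := by
    intro l
    by_cases hld : l < d
    · obtain ⟨A, B, hA, hB, h1, h2, hAB⟩ := t2_separation (hzh l hld)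
      exact ⟨A, B, hA, hB, fun _ => ⟨h1, h2, hAB⟩⟩
    · exact ⟨∅, ∅, isOpen_empty, isOpen_empty, fun hc => absurd hc hld⟩
  choose C D hCo hDo hCD using sepC
  set V : Set X := U ∩ ((⋂ l ∈ Finset.range (d - 1),
        (E l ∩ (fun x : X => g ^ (l + 1) • x) ⁻¹' F l)) ∩
      ⋂ l ∈ Finset.range d,
        ((fun x : X => g ^ l • x) ⁻¹' C l ∩ (fun x : X => h • x) ⁻¹' D l)) with hV_def
  have hVopen : IsOpen V := by
    refine hUopen.inter (IsOpen.inter ?_ ?_)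
    · apply isOpen_biInter_finset
      intro l _
      exact (hEo l).inter ((hFo l).preimage (hcont (g ^ (l + 1))))
    · apply isOpen_biInter_finset
      intro l _
      exact ((hCo l).preimage (hcont (g ^ l))).inter ((hDo l).preimage (hcont h))
  have hzV : z ∈ V := by
    refine ⟨hzU, ?_, ?_⟩
    · refine Set.mem_iInter₂.mpr fun l hl => ?_
      have hld : l + 1 < d := by
        have := Finset.mem_range.mp hl; omega
      exact ⟨(hEF l hld).1, (hEF l hld).2.1⟩
    · refine Set.mem_iInter₂.mpr fun l hl => ?_
      have hld : l < d := Finset.mem_range.mp hl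
      exact ⟨(hCD l hld).1, (hCD l hld).2.1⟩
  have hVU : V ⊆ U := Set.inter_subset_left
  have hVdisj : ∀ m, 0 < m → m < d → ∀ x ∈ V, g ^ m • x ∉ V := by
    intro m hm hmd x hxV hgx
    have hl : m - 1 ∈ Finset.range (d - 1) := Finset.mem_range.mpr (by omega)
    have hm1 : m - 1 + 1 = m := by omega
    have hx1 := Set.mem_iInter₂.mp hxV.2.1 (m - 1) hl
    have hx2 := Set.mem_iInter₂.mp hgx.2.1 (m - 1) hl
    have hFm : g ^ m • x ∈ F (m - 1) := by
      have := hx1.2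
      simpa [hm1] using this
    have hEm : g ^ m • x ∈ E (m - 1) := hx2.1
    exact Set.disjoint_left.mp (hEF (m - 1) (by omega)).2.2 hEm hFm
  have hVh : ∀ l, l < d → ∀ x ∈ V, ∀ x' ∈ V, h • x ≠ g ^ l • x' := by
    intro l hl x hxV x' hx'V heq
    have hlm : l ∈ Finset.range d := Finset.mem_range.mpr hl
    have hx1 := (Set.mem_iInter₂.mp hxV.2.2 l hlm).2
    have hx2 := (Set.mem_iInter₂.mp hx'V.2.2 l hlm).1
    refine Set.disjoint_left.mp (hCD l hl).2.2 hx2 ?_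
    show g ^ l • x' ∈ D l
    rw [← heq]; exact hx1
  -- splitting into disjoint open pieces
  have hsplit : ∀ A : Set X, IsOpen A → A.Nonempty →
      ∃ A' B' : Set X, (IsOpen A' ∧ A'.Nonempty ∧ A' ⊆ A) ∧
        (IsOpen B' ∧ B'.Nonempty ∧ B' ⊆ A) ∧ Disjoint A' B' := by
    intro A hAo hAne
    obtain ⟨t, ⟨x, hx⟩, hts⟩ := hfill A hAo hAne
    have hx' : t • x ≠ x := hx
    have hx2 : t • (t • x) ≠ t • x := fun hc => hx' (MulAction.injective t hc)
    obtain ⟨P, Q, hP, hQ, h1, h2, hPQ⟩ := t2_separation hx'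
    refine ⟨A ∩ Q, A ∩ P, ⟨hAo.inter hQ, ⟨x, hts hx, h2⟩, Set.inter_subset_left⟩,
      ⟨hAo.inter hP, ⟨t • x, hts hx2, h1⟩, Set.inter_subset_left⟩, ?_⟩
    exact (hPQ.symm.mono Set.inter_subset_right Set.inter_subset_right)
  have hsp : ∀ A : {S : Set X // IsOpen S ∧ S.Nonempty},
      ∃ p : {S : Set X // IsOpen S ∧ S.Nonempty} × {S : Set X // IsOpen S ∧ S.Nonempty},
        p.1.1 ⊆ A.1 ∧ p.2.1 ⊆ A.1 ∧ Disjoint p.1.1 p.2.1 := by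
    rintro ⟨A, hAo, hAne⟩
    obtain ⟨A', B', ⟨h1, h2, h3⟩, ⟨h4, h5, h6⟩, h7⟩ := hsplit A hAo hAne
    exact ⟨(⟨A', h1, h2⟩, ⟨B', h4, h5⟩), h3, h6, h7⟩
  choose sp hsp1 hsp2 hsp3 using hsp
  set Aseq : ℕ → {S : Set X // IsOpen S ∧ S.Nonempty} :=
    fun n => Nat.rec ⟨V, hVopen, ⟨z, hzV⟩⟩ (fun _ A => (sp A).1) n with hAseq_def
  have hAstep : ∀ m, (Aseq (m + 1)).1 ⊆ (Aseq m).1 := fun m => hsp1 (Aseq m)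
  have hAmono : ∀ i j, i ≤ j → (Aseq j).1 ⊆ (Aseq i).1 := by
    intro i j hij
    induction j with
    | zero => have : i = 0 := by omega
              subst this; exact subset_rfl
    | succ j ih =>
      rcases Nat.lt_succ_iff_lt_or_eq.mp (Nat.lt_succ_of_le hij) with hlt | rfl
      · exact (hAstep j).trans (ih (by omega))
      · exact subset_rfl
  set B : ℕ → Set X := fun m => ((sp (Aseq m)).2).1 with hB_def
  have hBo : ∀ m, IsOpen (B m) := fun m => ((sp (Aseq m)).2).2.1
  have hBne : ∀ m, (B m).Nonempty := fun m => ((sp (Aseq m)).2).2.2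
  have hBA : ∀ m, B m ⊆ (Aseq m).1 := fun m => hsp2 (Aseq m)
  have hBV : ∀ m, B m ⊆ V := fun m => (hBA m).trans (hAmono 0 m (Nat.zero_le m))
  have hBdisj : ∀ i j, i < j → Disjoint (B i) (B j) := by
    intro i j hij
    have h1 : B j ⊆ (sp (Aseq i)).1.1 := (hBA j).trans (hAmono (i + 1) j hij)
    exact ((hsp3 (Aseq i)).symm.mono_right h1)
  -- the elements t_j and s_j
  have htj : ∀ m : ℕ, ∃ t : G, {x : X | t • x ≠ x}.Nonempty ∧ {x : X | t • x ≠ x} ⊆ B m :=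
    fun m => hfill (B m) (hBo m) (hBne m)
  choose τ hτne hτsub using htj
  set s : ℕ → G := fun m => ((List.range d).map (fun l => g ^ l * τ m * (g ^ l)⁻¹)).prod
    with hs_def
  have hspec : ∀ m : ℕ,
      (s m * g = g * s m) ∧
      (∀ x : X, (∀ l, l < d → τ m • ((g ^ l)⁻¹ • x) = (g ^ l)⁻¹ • x) → s m • x = x) ∧
      (∀ x ∈ V, s m • x = τ m • x) :=
    fun m => s_spec g (τ m) d hd V U hVU hUfix
      (fun x hx => hBV m (hτsub m hx)) hVdisj
  -- conclude
  apply Set.infinite_of_injective_forall_mem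
    (f := fun m : ℕ => (s m)⁻¹ * h * (s m)) (s := _)
  · intro j k hjk
    have hjk' : (s j)⁻¹ * h * s j = (s k)⁻¹ * h * s k := hjk
    by_contra hne
    obtain ⟨x, hx⟩ := hτne j
    have hx' : τ j • x ≠ x := hx
    have hxB : x ∈ B j := hτsub j hx
    have hxV : x ∈ V := hBV j hxB
    have hother : ∀ l, l < d → τ k • ((g ^ l)⁻¹ • x) = (g ^ l)⁻¹ • x := by
      intro l hl
      by_contra hc
      have hmem : (g ^ l)⁻¹ • x ∈ B k := hτsub k hc
      rcases Nat.eq_zero_or_pos l with rfl | hlpos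
      · simp only [pow_zero, inv_one, one_smul] at hmem
        rcases lt_or_gt_of_ne hne with hlt | hgt
        · exact Set.disjoint_left.mp (hBdisj j k hlt) hxB hmem
        · exact Set.disjoint_left.mp (hBdisj k j hgt) hmem hxB
      · have hv : (g ^ l)⁻¹ • x ∈ V := hBV k hmem
        have := hVdisj l hlpos hl _ hv
        rw [smul_inv_smul] at this
        exact this hxV
    have hskx : s k • x = x := (hspec k).2.1 x hother
    have hskinv : (s k)⁻¹ • x = x := by
      rw [inv_smul_eq_iff]; exact hskx.symm
    have hsjx : s j • x = τ j • x := (hspec j).2.2 x hxV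
    have hhx : ∀ m : ℕ, s m • (h • x) = h • x := by
      intro m
      apply (hspec m).2.1
      intro l hl
      by_contra hc
      have hmem : (g ^ l)⁻¹ • (h • x) ∈ B m := hτsub m hc
      have hv : (g ^ l)⁻¹ • (h • x) ∈ V := hBV m hmem
      have := hVh l hl x hxV _ hv
      rw [smul_inv_smul] at this
      exact this rfl
    have hskinvhx : (s k)⁻¹ • (h • x) = h • x := by
      rw [inv_smul_eq_iff]; exact (hhx k).symm
    have hu : h * (s j * (s k)⁻¹) = (s j * (s k)⁻¹) * h := by
      calc h * (s j * (s k)⁻¹)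
          = s j * ((s j)⁻¹ * h * s j) * (s k)⁻¹ := by group
        _ = s j * ((s k)⁻¹ * h * s k) * (s k)⁻¹ := by rw [hjk']
        _ = (s j * (s k)⁻¹) * h := by group
    have := congrArg (fun w : G => w • x) hu
    simp only [mul_smul] at this
    rw [hskinv, hsjx, hskinvhx, hhx j] at this
    exact hx' (MulAction.injective h this)
  · intro m
    exact ⟨s m, Subgroup.mem_centralizer_singleton_iff.mpr (hspec m).1, rfl⟩
end
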